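/- A learned clause can become non-derivable after clause deletion: for the PCNF ψ = ∃x₁∀y₈∃x₅,x₂,x₆,x₄. (y₈∨¬x₅)∧(x₂∨¬x₆)∧(¬x₁∨x₄)∧(¬y₈∨¬x₄)∧(x₁∨x₆)∧(x₄∨x₅), the clause (¬x₁) is derivable by Q-resolution from ψ, but not derivable by Q-resolution from the PCNF ψ₁ obtained by deleting the clause (¬y₈∨¬x₄). -/

import Mathlib

/-- Variables are natural numbers. -/
abbrev Var := Nat

/-- A literal: a variable with a polarity (`pos = true` means positive). -/
structure Lit where
  var : Var
  pos : Bool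
deriving DecidableEq, Repr

abbrev Clause := List Lit
abbrev Cube := List Lit
abbrev CNF := List Clause

abbrev Assignment := Var → Bool

def Lit.eval (α : Assignment) (l : Lit) : Bool :=
  if l.pos then α l.var else !(α l.var)

def Clause.eval (α : Assignment) (C : Clause) : Bool := C.any (Lit.eval α)

def Cube.evalCube (α : Assignment) (C : Cube) : Bool := C.all (Lit.eval α)

def CNF.eval (α : Assignment) (φ : CNF) : Bool := φ.all (Clause.eval α)

/-- A flat quantifier prefix: list of (quantifier, variable); `true` = ∃, `false` = ∀. -/
abbrev QPrefix := List (Bool × Var)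

/-- Recursive semantics of closed prenex QBFs, relative to an ambient assignment `α`. -/
def QSat (α : Assignment) : QPrefix → (Assignment → Bool) → Prop
  | [], m => m α = true
  | (true, x) :: p, m => ∃ b, QSat (Function.update α x b) p m
  | (false, x) :: p, m => ∀ b, QSat (Function.update α x b) p m

/-- Satisfiability of a closed prenex formula. -/
def Sat (L : QPrefix) (m : Assignment → Bool) : Prop :=
  QSat (fun _ => false) L m

def pvars (L : QPrefix) : List Var := L.map Prod.snd

/-- The quantifier of a variable in the prefix (`true` = ∃). -/
def quantOf (L : QPrefix) (x : Var) : Bool :=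
  ((L.find? (fun p => p.2 == x)).map Prod.fst).getD true

/-- Position of a variable in the linear prefix ordering. -/
def varIdx (L : QPrefix) (x : Var) : Nat := (pvars L).idxOf x

def Clause.vars (C : Clause) : List Var := C.map Lit.var
def CNF.vars (φ : CNF) : List Var := φ.flatMap Clause.vars

/-- A closed PCNF: all matrix variables are quantified, and no variable twice. -/
def Closed (L : QPrefix) (φ : CNF) : Prop :=
  (∀ v ∈ CNF.vars φ, v ∈ pvars L) ∧ (pvars L).Nodup

def existLits (L : QPrefix) (C : List Lit) : List Lit :=
  C.filter (fun l => quantOf L l.var)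

def univLits (L : QPrefix) (C : List Lit) : List Lit :=
  C.filter (fun l => !(quantOf L l.var))

/-- Universal reduction of a clause: remove universal literals larger than all
existential literals of the clause. -/
def univRed (L : QPrefix) (C : Clause) : Clause :=
  C.filter (fun l =>
    !((!(quantOf L l.var)) &&
      (existLits L C).all (fun l' => decide (varIdx L l'.var < varIdx L l.var))))

/-- Existential reduction of a cube: remove existential literals larger than all
universal literals of the cube. -/
def exRed (L : QPrefix) (C : Cube) : Cube :=
  C.filter (fun l =>
    !((quantOf L l.var) &&
      (univLits L C).all (fun l' => decide (varIdx L l'.var < varIdx L l.var))))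

def Lit.neg (l : Lit) : Lit := ⟨l.var, !l.pos⟩

/-- Tautological clause / contradictory cube: contains complementary literals. -/
def Tauto (C : List Lit) : Prop := ∃ l ∈ C, Lit.neg l ∈ C

/-- Tentative Q-qResolvent of two clauses on existential pivot `p`. -/
def qResolvent (L : QPrefix) (C₁ C₂ : Clause) (p : Var) : Clause :=
  (univRed L C₁).filter (fun l => l ≠ ⟨p, true⟩) ++
  (univRed L C₂).filter (fun l => l ≠ ⟨p, false⟩)

/-- Q-resolution derivations from the clauses of `φ`. -/
inductive QDer (L : QPrefix) (φ : CNF) : Clause → Prop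
  | ax {C} : C ∈ φ → QDer L φ C
  | ur {C} : QDer L φ C → QDer L φ (univRed L C)
  | res {C₁ C₂} {p : Var} :
      QDer L φ C₁ → QDer L φ C₂ →
      ¬ Tauto C₁ → ¬ Tauto C₂ →
      quantOf L p = true → (⟨p, true⟩ : Lit) ∈ C₁ → (⟨p, false⟩ : Lit) ∈ C₂ →
      ¬ Tauto (qResolvent L C₁ C₂ p) →
      QDer L φ (qResolvent L C₁ C₂ p)

/-- The initial cube of a (total) model `α`: conjunction of the literals set by `α`,
in prefix order. -/
def initCube (L : QPrefix) (α : Assignment) : Cube :=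
  L.map (fun p => ⟨p.2, α p.2⟩)

/-- Tentative cube qResolvent of two cubes on universal pivot `x`. -/
def cubeResolvent (L : QPrefix) (C₁ C₂ : Cube) (x : Var) : Cube :=
  (exRed L C₁).filter (fun l => l ≠ ⟨x, true⟩) ++
  (exRed L C₂).filter (fun l => l ≠ ⟨x, false⟩)

/-- Cube derivations: model generation rule, existential reduction, cube resolution. -/
inductive CubeDer (L : QPrefix) (φ : CNF) : Cube → Prop
  | init (α : Assignment) : CNF.eval α φ = true → CubeDer L φ (initCube L α)
  | er {C} : CubeDer L φ C → CubeDer L φ (exRed L C)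
  | res {C₁ C₂} {x : Var} :
      CubeDer L φ C₁ → CubeDer L φ C₂ →
      ¬ Tauto C₁ → ¬ Tauto C₂ →
      quantOf L x = false → (⟨x, true⟩ : Lit) ∈ C₁ → (⟨x, false⟩ : Lit) ∈ C₂ →
      ¬ Tauto (cubeResolvent L C₁ C₂ x) →
      CubeDer L φ (cubeResolvent L C₁ C₂ x)

/-- Block-structured prefix: list of (quantifier, block of variables). -/
abbrev BPrefix := List (Bool × List Var)

def flatP (P : BPrefix) : QPrefix := P.flatMap (fun b => b.2.map (fun x => (b.1, x)))

def SatB (P : BPrefix) (m : Assignment → Bool) : Prop := Sat (flatP P) m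

/-- Closed PCNF with block prefix. -/
def ClosedB (P : BPrefix) (φ : CNF) : Prop :=
  (∀ v ∈ CNF.vars φ, v ∈ pvars (flatP P)) ∧
  (∀ v ∈ pvars (flatP P), v ∈ CNF.vars φ) ∧
  (pvars (flatP P)).Nodup



/-- Prefix of the running example: ∃x₁ ∀y₈ ∃x₅ x₂ x₆ x₄ (variable i named i). -/
def exPrefix : QPrefix := [(true, 1), (false, 8), (true, 5), (true, 2), (true, 6), (true, 4)]

def cl1 : Clause := [⟨8, true⟩, ⟨5, false⟩]   -- (y₈ ∨ ¬x₅)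
def cl2 : Clause := [⟨2, true⟩, ⟨6, false⟩]   -- (x₂ ∨ ¬x₆)
def cl3 : Clause := [⟨1, false⟩, ⟨4, true⟩]   -- (¬x₁ ∨ x₄)
def cl4 : Clause := [⟨8, false⟩, ⟨4, false⟩]  -- (¬y₈ ∨ ¬x₄)
def cl5 : Clause := [⟨1, true⟩, ⟨6, true⟩]    -- (x₁ ∨ x₆)
def cl6 : Clause := [⟨4, true⟩, ⟨5, true⟩]    -- (x₄ ∨ x₅)

def phi : CNF := [cl1, cl2, cl3, cl4, cl5, cl6]

/-- ψ₁: ψ with the clause (¬y₈ ∨ ¬x₄) deleted. -/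
def phi1 : CNF := [cl1, cl2, cl3, cl5, cl6]

/-! Under the assignment with `x₅` false and every other variable true, each clause of ψ₁
contains a true existential literal. Universal reduction never removes existential literals,
and of the two pivot literals `p`, `¬p` only one is true, so the other resolvent premise keeps
its true existential literal: the property passes to every Q-resolution derivable clause.
The unit clause `(¬x₁)` does not have it. -/

instance (C : List Lit) : Decidable (Tauto C) :=
  inferInstanceAs (Decidable (∃ l ∈ C, Lit.neg l ∈ C))

def SatisfiesExistentially (L : QPrefix) (α : Assignment) (C : Clause) : Prop :=
  ∃ l ∈ C, quantOf L l.var = true ∧ l.eval α = true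

instance (L : QPrefix) (α : Assignment) (C : Clause) :
    Decidable (SatisfiesExistentially L α C) :=
  inferInstanceAs (Decidable (∃ l ∈ C, quantOf L l.var = true ∧ l.eval α = true))

section QResolution

variable {L : QPrefix} {α : Assignment}

lemma mem_univRed_of_existential {C : Clause} {l : Lit} (hl : l ∈ C)
    (hex : quantOf L l.var = true) : l ∈ univRed L C :=
  List.mem_filter.2 ⟨hl, by simp [hex]⟩

lemma SatisfiesExistentially.univRed {C : Clause} (h : SatisfiesExistentially L α C) :
    SatisfiesExistentially L α (univRed L C) :=
  let ⟨l, hl, hex, heval⟩ := h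
  ⟨l, mem_univRed_of_existential hl hex, hex, heval⟩

lemma SatisfiesExistentially.qResolvent {C₁ C₂ : Clause} (p : Var)
    (h₁ : SatisfiesExistentially L α C₁) (h₂ : SatisfiesExistentially L α C₂) :
    SatisfiesExistentially L α (qResolvent L C₁ C₂ p) := by
  obtain ⟨l₁, hl₁, hex₁, heval₁⟩ := h₁
  obtain ⟨l₂, hl₂, hex₂, heval₂⟩ := h₂
  by_cases hpiv : l₁ = ⟨p, true⟩
  · have hp : α p = true := by simpa [hpiv, Lit.eval] using heval₁
    have hne : l₂ ≠ ⟨p, false⟩ := by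
      rintro rfl
      simp [Lit.eval, hp] at heval₂
    exact ⟨l₂, List.mem_append_right _
      (List.mem_filter.2 ⟨mem_univRed_of_existential hl₂ hex₂, by simpa using hne⟩), hex₂, heval₂⟩
  · exact ⟨l₁, List.mem_append_left _
      (List.mem_filter.2 ⟨mem_univRed_of_existential hl₁ hex₁, by simpa using hpiv⟩), hex₁, heval₁⟩

theorem QDer.satisfiesExistentially {φ : CNF}
    (hφ : ∀ C ∈ φ, SatisfiesExistentially L α C) {C : Clause} (h : QDer L φ C) :
    SatisfiesExistentially L α C := by
  induction h with
  | ax hC => exact hφ _ hC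
  | ur _ ih => exact ih.univRed
  | res _ _ _ _ _ _ _ _ ih₁ ih₂ => exact ih₁.qResolvent _ ih₂

end QResolution

/-- Example 2: the clause (¬x₁) is Q-resolution derivable from ψ,
but not from ψ₁ obtained by deleting (¬y₈ ∨ ¬x₄). -/
theorem learned_clause_nonderivable :
    QDer exPrefix phi [⟨1, false⟩] ∧ ¬ QDer exPrefix phi1 [⟨1, false⟩] := by
  constructor
  · have hres : QDer exPrefix phi (qResolvent exPrefix cl3 cl4 4) :=
      .res (.ax (by decide)) (.ax (by decide)) (by decide) (by decide) (by decide) (by decide)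
        (by decide) (by decide)
    have hred : univRed exPrefix (qResolvent exPrefix cl3 cl4 4) = [⟨1, false⟩] := by decide
    exact hred ▸ hres.ur
  · intro h
    have hsat := h.satisfiesExistentially (α := fun v => v != 5) (by decide)
    exact absurd hsat (by decide)
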